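/- Let F be a transitive countable relational structure with a bounded 1-supported metric-like stationary independence relation ⫫, and let g ∈ Aut(F) be such that a ⫫_∅ g(a) for some a ∈ F. Then for every finite set A ⊂ F there is x ∈ F with x ⫫_∅ A and x ≠ g(x). -/
import Mathlib


open FirstOrder

namespace PaperSIR

/-- The group structure on the automorphism group of a first-order structure. -/
instance autGroup {L : FirstOrder.Language} {F : Type*} [L.Structure F] :
    Group (F ≃[L] F) where
  mul f g := f.comp g
  one := FirstOrder.Language.Equiv.refl L F
  inv := FirstOrder.Language.Equiv.symm
  mul_assoc f g h := (FirstOrder.Language.Equiv.comp_assoc h g f).symm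
  one_mul := FirstOrder.Language.Equiv.refl_comp
  mul_one := FirstOrder.Language.Equiv.comp_refl
  inv_mul_cancel := FirstOrder.Language.Equiv.symm_comp_self

variable {L : FirstOrder.Language} {F : Type*} [L.Structure F] [DecidableEq F]

/-- The tuples `a` and `a'` have the same type over the finite set `X`, i.e. some
automorphism of `F` fixing `X` pointwise maps `a` to `a'`. -/
def SameTypeOver (L : FirstOrder.Language) {F : Type*} [L.Structure F] (X : Finset F) {n : ℕ} (a a' : Fin n → F) : Prop :=
  ∃ g : F ≃[L] F, (∀ x ∈ X, g x = x) ∧ ∀ i, g (a i) = a' i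

/-- The finite set enumerated by a tuple. -/
def fset {n : ℕ} (a : Fin n → F) : Finset F :=
  Finset.image a Finset.univ

/-- A stationary independence relation (SIR) on `F`: a ternary relation on finite
subsets of `F` satisfying Invariance, Symmetry, Monotonicity, Existence, Transitivity
and Stationarity. -/
structure IsSIR (indep : Finset F → Finset F → Finset F → Prop) : Prop where
  invariance : ∀ (g : F ≃[L] F) (A C B : Finset F),
    indep A C B ↔ indep (A.image g) (C.image g) (B.image g)
  symmetry : ∀ A C B, indep A C B → indep B C A
  monotonicity_left : ∀ A C B D, indep A C (B ∪ D) → indep A C B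
  monotonicity_right : ∀ A C B D, indep A C (B ∪ D) → indep A (B ∪ C) D
  existence : ∀ {n : ℕ} (a : Fin n → F) (C B : Finset F),
    ∃ a' : Fin n → F, SameTypeOver L C a a' ∧ indep (fset a') C B
  transitivity : ∀ A C B B', indep A C B → indep A (B ∪ C) B' → indep A C B'
  stationarity : ∀ {n : ℕ} (a a' : Fin n → F) (C B : Finset F),
    SameTypeOver L C a a' → indep (fset a) C B → indep (fset a') C B →
    SameTypeOver L (B ∪ C) a a'

/-- The three extra conditions making a SIR metric-like. -/
structure IsMetricLike (indep : Finset F → Finset F → Finset F → Prop) : Prop where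
  not_self : ∀ (a : F) (A : Finset F), a ∉ A → ¬ indep {a} A {a}
  exists_dep : ∀ a : F, ∃ b : F, b ≠ a ∧ ¬ indep {a} ∅ {b}
  perfect_triviality : ∀ A C B C', indep A C B → C ⊆ C' → indep A C' B

/-- A SIR is 1-supported if whenever `a ⫫_C b` there is `C' ⊆ C` with `|C'| ≤ 1`
and `a ⫫_{C'} b`. -/
def OneSupported (indep : Finset F → Finset F → Finset F → Prop) : Prop :=
  ∀ (a b : F) (C : Finset F), indep {a} C {b} →
    ∃ C' ⊆ C, C'.card ≤ 1 ∧ indep {a} C' {b}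

/-- A sequence of pairwise distinct vertices is geodesic if `aᵢ ⫫_{aⱼ} aₖ`
whenever `i < j < k`. -/
def IsGeodesic (indep : Finset F → Finset F → Finset F → Prop)
    {n : ℕ} (a : Fin n → F) : Prop :=
  Function.Injective a ∧ ∀ i j k : Fin n, i < j → j < k → indep {a i} {a j} {a k}

/-- `k₀` is a bound for the SIR: every geodesic sequence `a₀, …, a_k` with `k ≥ k₀`
satisfies `a₀ ⫫_∅ a_k`. -/
def BoundedBy (indep : Finset F → Finset F → Finset F → Prop) (k₀ : ℕ) : Prop :=
  ∀ k : ℕ, k₀ ≤ k → ∀ a : Fin (k + 1) → F, IsGeodesic indep a →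
    indep {a 0} ∅ {a (Fin.last k)}

/-- A SIR is bounded if some `k₀` is a bound for it. -/
def Bounded (indep : Finset F → Finset F → Finset F → Prop) : Prop :=
  ∃ k₀ : ℕ, BoundedBy indep k₀

/-- `‖⫫‖`: the least bound of a bounded SIR. -/
noncomputable def sirNorm (indep : Finset F → Finset F → Finset F → Prop) : ℕ :=
  sInf {k₀ : ℕ | BoundedBy indep k₀}

/-- `F` is transitive: all elements have the same type, i.e. `Aut(F)` acts
transitively. -/
def TransitiveStruct (L : FirstOrder.Language) (F : Type*) [L.Structure F] : Prop :=
  ∀ a b : F, ∃ g : F ≃[L] F, g a = b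

/-- `b` is almost free from `a`: `¬ a ⫫_∅ b` and every `c ∉ {a, b}` with `a ⫫_b c`
satisfies `a ⫫_∅ c`. -/
def AlmostFreeFrom (indep : Finset F → Finset F → Finset F → Prop) (b a : F) : Prop :=
  ¬ indep {a} ∅ {b} ∧
    ∀ c : F, c ≠ a → c ≠ b → indep {a} {b} {c} → indep {a} ∅ {c}

/-- `g` moves the type `tp(x/X)` almost maximally: some realisation `x'` of it
satisfies `x' ⫫_X g(x')`. -/
def MovesAlmostMaximally (indep : Finset F → Finset F → Finset F → Prop)
    (g : F ≃[L] F) (X : Finset F) (x : F) : Prop :=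
  ∃ x' : F, SameTypeOver L X ![x] ![x'] ∧ indep {x'} X {g x'}

/-- `g` moves the type `tp(x/X)` by distance `k`: there is a realisation `x'` and a
geodesic sequence `x' = c₀, …, c_k = g(x')`. -/
def MovesByDistance (indep : Finset F → Finset F → Finset F → Prop)
    (g : F ≃[L] F) (X : Finset F) (x : F) (k : ℕ) : Prop :=
  ∃ x' : F, SameTypeOver L X ![x] ![x'] ∧
    ∃ c : Fin (k + 1) → F, IsGeodesic indep c ∧ c 0 = x' ∧ c (Fin.last k) = g x'

end PaperSIR

open PaperSIR

section AuxStatement13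

open FirstOrder

variable {L : FirstOrder.Language} {F : Type*} [L.Structure F] [DecidableEq F]
variable {indep : Finset F → Finset F → Finset F → Prop}

private lemma fset_one' (a : Fin 1 → F) : fset a = {a 0} := by
  ext x
  simp [fset, Fin.exists_fin_one, eq_comm]

private lemma image_fixed' {h : F → F} {S : Finset F} (hf : ∀ x ∈ S, h x = x) :
    S.image h = S := by
  ext x
  simp only [Finset.mem_image]
  constructor
  · rintro ⟨y, hy, rfl⟩; rwa [hf y hy]
  · intro hx; exact ⟨x, hx, hf x hx⟩

private lemma mono_subset' (hSIR : IsSIR (L := L) indep) {X C B B' : Finset F}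
    (h : indep X C B) (hsub : B' ⊆ B) : indep X C B' := by
  have e : B' ∪ B = B := Finset.union_eq_right.mpr hsub
  exact hSIR.monotonicity_left X C B' B (by rwa [e])

private lemma indep_union' (hSIR : IsSIR (L := L) indep) {z : F} {C B B' : Finset F}
    (h1 : indep {z} C B) (h2 : indep {z} (B ∪ C) B') : indep {z} C (B ∪ B') := by
  obtain ⟨w, hst, hind⟩ := hSIR.existence ![z] C (B ∪ B')
  rw [fset_one'] at hind
  have hw1 : indep {w 0} C B := mono_subset' hSIR hind Finset.subset_union_left
  have hw2 : indep {w 0} (B ∪ C) B' := hSIR.monotonicity_right _ _ _ _ hind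
  have hz1 : indep (fset ![z]) C B := by
    rw [fset_one']; simpa using h1
  have hst2 := hSIR.stationarity ![z] w C B hst hz1 (by rw [fset_one']; exact hw1)
  have hz2 : indep (fset ![z]) (B ∪ C) B' := by
    rw [fset_one']; simpa using h2
  have hst3 := hSIR.stationarity ![z] w (B ∪ C) B' hst2 hz2 (by rw [fset_one']; exact hw2)
  obtain ⟨k, hkfix, hkmap⟩ := hst3
  have hkz : k z = w 0 := by simpa using hkmap 0
  have e1 : C.image k = C := image_fixed' (fun c hc =>
    hkfix c (Finset.mem_union_right _ (Finset.mem_union_right _ hc)))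
  have e2 : (B ∪ B').image k = B ∪ B' := image_fixed' (fun b hb => by
    rcases Finset.mem_union.mp hb with h' | h'
    · exact hkfix b (Finset.mem_union_right _ (Finset.mem_union_left _ h'))
    · exact hkfix b (Finset.mem_union_left _ h'))
  apply (hSIR.invariance k {z} C (B ∪ B')).mpr
  rw [Finset.image_singleton, hkz, e1, e2]
  exact hind

private lemma indep_of_forall_mem' (hSIR : IsSIR (L := L) indep)
    (hML : IsMetricLike indep) {z : F} {B : Finset F}
    (h : ∀ w ∈ B, indep {z} ∅ {w}) : B = ∅ ∨ indep {z} ∅ B := by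
  induction B using Finset.induction_on with
  | empty => exact Or.inl rfl
  | @insert a s has IH =>
    right
    have hA : indep {z} ∅ {a} := h a (Finset.mem_insert_self a s)
    rcases IH (fun w hw => h w (Finset.mem_insert_of_mem hw)) with rfl | hB
    · simpa using hA
    · have h2 : indep {z} (s ∪ ∅) {a} := by
        rw [Finset.union_empty]
        exact hML.perfect_triviality {z} ∅ {a} s hA (Finset.empty_subset s)
      have h3 := indep_union' hSIR hB h2
      rw [Finset.insert_eq, Finset.union_comm]
      exact h3

/-- `z` depends on `y` and all its dependencies channel through `y`. -/
private def Pprop (indep : Finset F → Finset F → Finset F → Prop) (z y : F) : Prop :=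
  z ≠ y ∧ ¬ indep {z} ∅ {y} ∧
    ∀ c, c ≠ z → c ≠ y → indep {z} {y} {c} → indep {z} ∅ {c}

private lemma Pprop_map' (hSIR : IsSIR (L := L) indep) (h : F ≃[L] F) {z y : F}
    (hp : Pprop indep z y) : Pprop indep (h z) (h y) := by
  obtain ⟨hne, hdep, hch⟩ := hp
  refine ⟨fun e => hne (h.injective e), ?_, ?_⟩
  · intro H
    apply hdep
    apply (hSIR.invariance h {z} ∅ {y}).mpr
    rw [Finset.image_singleton, Finset.image_singleton, Finset.image_empty]
    exact H
  · intro c hcz hcy hi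
    obtain ⟨c0, rfl⟩ := h.surjective c
    have hc0z : c0 ≠ z := fun e => hcz (congrArg h e)
    have hc0y : c0 ≠ y := fun e => hcy (congrArg h e)
    have hi0 : indep {z} {y} {c0} := by
      apply (hSIR.invariance h {z} {y} {c0}).mpr
      rw [Finset.image_singleton, Finset.image_singleton, Finset.image_singleton]
      exact hi
    have h1 := hch c0 hc0z hc0y hi0
    have h2 := (hSIR.invariance h {z} ∅ {c0}).mp h1
    rwa [Finset.image_singleton, Finset.image_singleton, Finset.image_empty] at h2

private lemma exists_af' (hSIR : IsSIR (L := L) indep) (hML : IsMetricLike indep)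
    (hbdd : Bounded indep) (p : F) : ∃ q, Pprop indep p q := by
  by_contra hcon
  have key : ∀ q, q ≠ p → ¬ indep {p} ∅ {q} →
      ∃ c, c ≠ p ∧ c ≠ q ∧ indep {p} {q} {c} ∧ ¬ indep {p} ∅ {c} := by
    intro q hq hdep
    by_contra hc
    push_neg at hc
    exact hcon ⟨q, Ne.symm hq, hdep, hc⟩
  obtain ⟨k₀, hk₀⟩ := hbdd
  obtain ⟨b0, hb0ne, hb0⟩ := hML.exists_dep p
  have build : ∀ n, ∃ d : ℕ → F,
      (∀ i, i ≤ n → ¬ indep {p} ∅ {d i}) ∧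
      (∀ i, i ≤ n → d i ≠ p) ∧
      (∀ i j, i < j → j ≤ n → d i ≠ d j) ∧
      (∀ i j, j < i → i ≤ n → indep {p} {d j} {d i}) ∧
      (∀ l j i, l < j → j < i → i ≤ n → indep {d l} {d j} {d i}) := by
    intro n
    induction n with
    | zero =>
      refine ⟨fun _ => b0, fun i _ => hb0, fun i _ => hb0ne, ?_, ?_, ?_⟩
      · intro i j hij hj; exact absurd hij (by omega)
      · intro i j hji hi; exact absurd hji (by omega)
      · intro l j i h1 h2 h3; exact absurd h2 (by omega)
    | succ n IH =>
      obtain ⟨d, h1, h2, h3, h4, h5⟩ := IH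
      obtain ⟨c, hcp, hcq, hcind0, hcdep⟩ := key (d n) (h2 n le_rfl) (h1 n le_rfl)
      obtain ⟨cf, hst, hcind⟩ := hSIR.existence ![c] {p, d n} ((Finset.range (n + 1)).image d)
      rw [fset_one'] at hcind
      set c' := cf 0 with hc'def
      obtain ⟨h0, h0fix, h0map⟩ := hst
      have h0p : h0 p = p := h0fix p (by simp)
      have h0q : h0 (d n) = d n := h0fix (d n) (by simp)
      have h0c : h0 c = c' := by simpa using h0map 0
      have hc'p : c' ≠ p := by
        rw [← h0c, ← h0p]
        exact fun e => hcp (h0.injective e)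
      have hc'q : c' ≠ d n := by
        rw [← h0c, ← h0q]
        exact fun e => hcq (h0.injective e)
      have hpqc' : indep {p} {d n} {c'} := by
        have := (hSIR.invariance h0 {p} {d n} {c}).mp hcind0
        rwa [Finset.image_singleton, Finset.image_singleton, Finset.image_singleton,
          h0p, h0q, h0c] at this
      have hc'dep : ¬ indep {p} ∅ {c'} := by
        intro H
        apply hcdep
        apply (hSIR.invariance h0 {p} ∅ {c}).mpr
        rw [Finset.image_singleton, Finset.image_empty, Finset.image_singleton, h0p, h0c]
        exact H
      have ham : ∀ m, m ≤ n → indep {c'} {p, d n} {d m} := by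
        intro m hm
        apply mono_subset' hSIR hcind
        simp only [Finset.singleton_subset_iff, Finset.mem_image]
        exact ⟨m, Finset.mem_range.mpr (by omega), rfl⟩
      have hbm : ∀ m, m ≤ n → indep {c'} {d n} {d m} := by
        intro m hm
        have hcs : indep {c'} {d n} {p} := hSIR.symmetry _ _ _ hpqc'
        have h2' : indep {c'} ({p} ∪ {d n}) {d m} := by
          rw [← Finset.insert_eq]
          exact ham m hm
        exact hSIR.transitivity {c'} {d n} {p} {d m} hcs h2'
      have hne' : ∀ m, m ≤ n → c' ≠ d m := by
        intro m hm e
        have hx := ham m hm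
        rw [← e] at hx
        exact hML.not_self c' {p, d n} (by simp [hc'p, hc'q]) hx
      have hI4 : ∀ j, j ≤ n → indep {p} {d j} {c'} := by
        intro j hj
        rcases eq_or_lt_of_le hj with rfl | hjn
        · exact hpqc'
        · have hpn : indep {p} {d j} {d n} := h4 n j hjn le_rfl
          have hstep : indep {p} ({d n} ∪ {d j}) {c'} :=
            hML.perfect_triviality {p} {d n} {c'} _ hpqc' Finset.subset_union_left
          exact hSIR.transitivity {p} {d j} {d n} {c'} hpn hstep
      have hI5 : ∀ l j, l < j → j ≤ n → indep {d l} {d j} {c'} := by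
        intro l j hlj hj
        rcases eq_or_lt_of_le hj with rfl | hjn
        · exact hSIR.symmetry _ _ _ (hbm l (by omega))
        · have hln : indep {d l} {d j} {d n} := h5 l j n hlj hjn le_rfl
          have hmid : indep {c'} ({d n} ∪ {d j}) {d l} :=
            hML.perfect_triviality {c'} {d n} {d l} _ (hbm l (by omega))
              Finset.subset_union_left
          have hmid' := hSIR.symmetry _ _ _ hmid
          exact hSIR.transitivity {d l} {d j} {d n} {c'} hln hmid'
      have hupd : ∀ i, i ≤ n → Function.update d (n + 1) c' i = d i := fun i hi =>
        Function.update_of_ne (by omega) _ _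
      have hupd2 : Function.update d (n + 1) c' (n + 1) = c' := Function.update_self _ _ _
      refine ⟨Function.update d (n + 1) c', ?_, ?_, ?_, ?_, ?_⟩
      · intro i hi
        rcases (show i ≤ n ∨ i = n + 1 by omega) with hi' | rfl
        · rw [hupd i hi']; exact h1 i hi'
        · rw [hupd2]; exact hc'dep
      · intro i hi
        rcases (show i ≤ n ∨ i = n + 1 by omega) with hi' | rfl
        · rw [hupd i hi']; exact h2 i hi'
        · rw [hupd2]; exact hc'p
      · intro i j hij hj
        rcases (show j ≤ n ∨ j = n + 1 by omega) with hj' | rfl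
        · rw [hupd i (by omega), hupd j hj']; exact h3 i j hij hj'
        · rw [hupd i (by omega), hupd2]
          exact fun e => hne' i (by omega) e.symm
      · intro i j hji hi
        rcases (show i ≤ n ∨ i = n + 1 by omega) with hi' | rfl
        · rw [hupd i hi', hupd j (by omega)]; exact h4 i j hji hi'
        · rw [hupd2, hupd j (by omega)]; exact hI4 j (by omega)
      · intro l j i hlj hji hi
        rcases (show i ≤ n ∨ i = n + 1 by omega) with hi' | rfl
        · rw [hupd l (by omega), hupd j (by omega), hupd i hi']
          exact h5 l j i hlj hji hi'
        · rw [hupd l (by omega), hupd j (by omega), hupd2]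
          exact hI5 l j hlj (by omega)
  obtain ⟨d, h1, h2, h3, h4, h5⟩ := build k₀
  set e : Fin (k₀ + 1 + 1) → F := Fin.cases p (fun i : Fin (k₀ + 1) => d i) with he
  have he0 : e 0 = p := rfl
  have hesucc : ∀ i : Fin (k₀ + 1), e i.succ = d i := fun i => by
    simp [he]
  have hgeo : IsGeodesic indep e := by
    constructor
    · intro x y hxy
      rcases Fin.eq_zero_or_eq_succ x with rfl | ⟨x', rfl⟩ <;>
        rcases Fin.eq_zero_or_eq_succ y with rfl | ⟨y', rfl⟩
      · rfl
      · rw [he0, hesucc] at hxy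
        exact absurd hxy.symm (h2 y' (Fin.is_le y'))
      · rw [he0, hesucc] at hxy
        exact absurd hxy (h2 x' (Fin.is_le x'))
      · rw [hesucc, hesucc] at hxy
        rcases lt_trichotomy (x' : ℕ) (y' : ℕ) with h | h | h
        · exact absurd hxy (h3 x' y' h (Fin.is_le y'))
        · exact congrArg Fin.succ (Fin.ext h)
        · exact absurd hxy.symm (h3 y' x' h (Fin.is_le x'))
    · intro i j k hij hjk
      rcases Fin.eq_zero_or_eq_succ j with rfl | ⟨j', rfl⟩
      · exact absurd hij (Fin.not_lt_zero _)
      · rcases Fin.eq_zero_or_eq_succ k with rfl | ⟨k', rfl⟩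
        · exact absurd hjk (Fin.not_lt_zero _)
        · rcases Fin.eq_zero_or_eq_succ i with rfl | ⟨i', rfl⟩
          · rw [he0, hesucc, hesucc]
            exact h4 k' j' (by exact_mod_cast Fin.succ_lt_succ_iff.mp hjk) (Fin.is_le k')
          · rw [hesucc, hesucc, hesucc]
            exact h5 i' j' k' (by exact_mod_cast Fin.succ_lt_succ_iff.mp hij)
              (by exact_mod_cast Fin.succ_lt_succ_iff.mp hjk) (Fin.is_le k')
  have hfin := hk₀ (k₀ + 1) (Nat.le_succ k₀) e hgeo
  have hlast : e (Fin.last (k₀ + 1)) = d k₀ := by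
    have h' : Fin.last (k₀ + 1) = (Fin.last k₀).succ := (Fin.succ_last k₀).symm
    rw [h', hesucc]
    simp
  rw [he0, hlast] at hfin
  exact h1 k₀ le_rfl hfin

end AuxStatement13


theorem statement_13 {L : FirstOrder.Language} [L.IsRelational]
    {F : Type*} [L.Structure F] [Countable F] [DecidableEq F]
    (indep : Finset F → Finset F → Finset F → Prop)
    (htrans : TransitiveStruct L F)
    (hSIR : IsSIR (L := L) indep) (hML : IsMetricLike indep)
    (hbdd : Bounded indep) (h1sup : OneSupported indep)
    (g : F ≃[L] F) (a : F) (ha : indep {a} ∅ {g a}) :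
    ∀ A : Finset F, ∃ x : F, indep {x} ∅ A ∧ g x ≠ x := by
  intro A
  by_contra hcon
  push_neg at hcon
  have hga : g a ≠ a := by
    intro h
    exact hML.not_self a ∅ (Finset.notMem_empty a) (by rwa [h] at ha)
  have claimC : ∀ y, y ∉ A → g y = y := by
    intro y hyA
    by_contra hgy
    obtain ⟨q, hPq⟩ := exists_af' hSIR hML hbdd y
    obtain ⟨h0, hh0⟩ := htrans q y
    have hP1 : Pprop indep (h0 y) y := by
      have := Pprop_map' hSIR h0 hPq
      rwa [hh0] at this
    obtain ⟨zf, hst, hzind⟩ := hSIR.existence ![h0 y] {y} (A ∪ {g y})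
    rw [fset_one'] at hzind
    set z := zf 0 with hzdef
    obtain ⟨h2, h2fix, h2map⟩ := hst
    have h2y : h2 y = y := h2fix y (Finset.mem_singleton_self y)
    have h2z : h2 (h0 y) = z := by simpa using h2map 0
    have hPz : Pprop indep z y := by
      have := Pprop_map' hSIR h2 hP1
      rwa [h2z, h2y] at this
    obtain ⟨hzy, hzdep, hch⟩ := hPz
    have hpw : ∀ w ∈ A ∪ {g y}, indep {z} ∅ {w} := by
      intro w hw
      have hwy : w ≠ y := by
        rcases Finset.mem_union.mp hw with h' | h'
        · exact fun e => hyA (e ▸ h')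
        · rw [Finset.mem_singleton] at h'
          rw [h']
          exact hgy
      have hiw : indep {z} {y} {w} :=
        mono_subset' hSIR hzind (Finset.singleton_subset_iff.mpr hw)
      have hwz : w ≠ z := by
        intro e
        rw [e] at hiw
        exact hML.not_self z {y} (by simpa using hzy) hiw
      exact hch w hwz hwy hiw
    have hZ : indep {z} ∅ (A ∪ {g y}) := by
      rcases indep_of_forall_mem' hSIR hML hpw with h' | h'
      · exact absurd (h' ▸ Finset.mem_union_right A (Finset.mem_singleton_self (g y)))
          (Finset.notMem_empty _)
      · exact h'
    have hzA : indep {z} ∅ A := mono_subset' hSIR hZ Finset.subset_union_left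
    have hzgy : indep {z} ∅ {g y} := mono_subset' hSIR hZ Finset.subset_union_right
    have hgz : g z = z := hcon z hzA
    apply hzdep
    apply (hSIR.invariance g {z} ∅ {y}).mpr
    rw [Finset.image_singleton, Finset.image_empty, Finset.image_singleton, hgz]
    exact hzgy
  have haA : a ∈ A := by
    by_contra h
    exact hga (claimC a h)
  obtain ⟨q, hPq⟩ := exists_af' hSIR hML hbdd a
  obtain ⟨h0, hh0⟩ := htrans q a
  have hP1 : Pprop indep (h0 a) a := by
    have := Pprop_map' hSIR h0 hPq
    rwa [hh0] at this
  obtain ⟨zf, hst, hzind⟩ := hSIR.existence ![h0 a] {a} (A ∪ {g a})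
  rw [fset_one'] at hzind
  set z := zf 0 with hzdef
  obtain ⟨h2, h2fix, h2map⟩ := hst
  have h2a : h2 a = a := h2fix a (Finset.mem_singleton_self a)
  have h2z : h2 (h0 a) = z := by simpa using h2map 0
  have hPz : Pprop indep z a := by
    have := Pprop_map' hSIR h2 hP1
    rwa [h2z, h2a] at this
  obtain ⟨hza, hzdep, hch⟩ := hPz
  have hkey : ∀ w ∈ A ∪ {g a}, w ≠ a → w ≠ z ∧ indep {z} ∅ {w} := by
    intro w hw hwa
    have hiw : indep {z} {a} {w} :=
      mono_subset' hSIR hzind (Finset.singleton_subset_iff.mpr hw)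
    have hwz : w ≠ z := by
      intro e
      rw [e] at hiw
      exact hML.not_self z {a} (by simpa using hza) hiw
    exact ⟨hwz, hch w hwz hwa hiw⟩
  have hzA : z ∉ A := by
    intro hz
    rcases eq_or_ne z a with e | e
    · exact hza e
    · exact (hkey z (Finset.mem_union_left _ hz) e).1 rfl
  have hgz : g z = z := claimC z hzA
  have hzga : indep {z} ∅ {g a} :=
    (hkey (g a) (Finset.mem_union_right _ (Finset.mem_singleton_self _)) hga).2
  apply hzdep
  apply (hSIR.invariance g {z} ∅ {a}).mpr
  rw [Finset.image_singleton, Finset.image_empty, Finset.image_singleton, hgz]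
  exact hzga
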